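/- arXiv:1102.4366 — 3 statements merged into one kernel-verified Lean document; each statement's English description precedes it below -/
import Mathlib

section
/- Let X = ℤ/3ℤ with the Takasaki kei operation x ▷ y = 2y − x. The number of pairs of functions (t, s) with t, s : X × X → ℤ/5ℤ satisfying all six ℤ_K[X]-module relations (t(x,y)t(x▷y,y) = 1; t(x,y)s(x▷y,y) + s(x,y) = 0; t(x,x) + s(x,x) = 1; t(x▷y,z)t(x,y) = t(x▷z,y▷z)t(x,z); t(x▷y,z)s(x,y) = s(x▷z,y▷z)t(y,z); s(x▷y,z) = s(x▷z,y▷z)s(y,z) + t(x▷z,y▷z)s(x,z) for all x, y, z ∈ X) is exactly 48. -/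
/-- The Takasaki kei operation on `ℤ/3ℤ`: `x ▷ y = 2y - x`. -/
def takOp (x y : ZMod 3) : ZMod 3 := 2 * y - x

def kmP (p : (ZMod 3 → ZMod 3 → ZMod 5) × (ZMod 3 → ZMod 3 → ZMod 5)) : Prop :=
      (∀ x y : ZMod 3, p.1 x y * p.1 (takOp x y) y = 1) ∧
      (∀ x y : ZMod 3, p.1 x y * p.2 (takOp x y) y + p.2 x y = 0) ∧
      (∀ x : ZMod 3, p.1 x x + p.2 x x = 1) ∧
      (∀ x y z : ZMod 3,
        p.1 (takOp x y) z * p.1 x y = p.1 (takOp x z) (takOp y z) * p.1 x z) ∧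
      (∀ x y z : ZMod 3,
        p.1 (takOp x y) z * p.2 x y = p.2 (takOp x z) (takOp y z) * p.1 y z) ∧
      (∀ x y z : ZMod 3,
        p.2 (takOp x y) z =
          p.2 (takOp x z) (takOp y z) * p.2 y z +
            p.1 (takOp x z) (takOp y z) * p.2 x z)

def psiT (a b c : ZMod 5) : ZMod 3 → ZMod 3 → ZMod 5 := fun x y =>
  if x = 0 then (if y = 0 then a else if y = 1 then b else c)
  else if x = 1 then (if y = 0 then a*b*c^3 else if y = 1 then a else c^3)
  else (if y = 0 then a*b^3*c else if y = 1 then b^3 else a)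

def psiS (a b c d : ZMod 5) : ZMod 3 → ZMod 3 → ZMod 5 := fun x y =>
  if x = 0 then (if y = 0 then 1-a else if y = 1 then d else b^2*c^2*d)
  else if x = 1 then (if y = 0 then a*c*d else if y = 1 then 1-a else -(b^2*c*d))
  else (if y = 0 then -(b^3*c^2*d) else if y = 1 then -(b^3*d) else 1-a)

def kmQ (v : ZMod 5 × ZMod 5 × ZMod 5 × ZMod 5) : Prop :=
  kmP (psiT v.1 v.2.1 v.2.2.1, psiS v.1 v.2.1 v.2.2.1 v.2.2.2)

instance : DecidablePred kmQ := fun v => by unfold kmQ kmP; infer_instance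

lemma recon (t s : ZMod 3 → ZMod 3 → ZMod 5)
    (h1 : ∀ x y : ZMod 3, t x y * t (takOp x y) y = 1)
    (h2 : ∀ x y : ZMod 3, t x y * s (takOp x y) y + s x y = 0)
    (h3 : ∀ x : ZMod 3, t x x + s x x = 1)
    (h4 : ∀ x y z : ZMod 3,
      t (takOp x y) z * t x y = t (takOp x z) (takOp y z) * t x z)
    (h5 : ∀ x y z : ZMod 3,
      t (takOp x y) z * s x y = s (takOp x z) (takOp y z) * t y z) :
    t = psiT (t 0 0) (t 0 1) (t 0 2) ∧ s = psiS (t 0 0) (t 0 1) (t 0 2) (s 0 1) := by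
  have e00 : takOp 0 0 = 0 := by decide
  have e01 : takOp 0 1 = 2 := by decide
  have e02 : takOp 0 2 = 1 := by decide
  have e10 : takOp 1 0 = 2 := by decide
  have e12 : takOp 1 2 = 0 := by decide
  have F1 := h1 0 0
  have F2 := h1 0 1
  have F3 := h1 0 2
  have F4 := h1 1 0
  have F5 := h4 0 0 1
  have F6 := h4 0 0 2
  have F7 := h4 0 1 2
  have F8 := h5 0 1 0
  have F9 := h5 0 1 2
  have F10 := h2 0 2
  have F11 := h2 0 1
  have F12 := h2 1 0
  have G0 := h3 0
  have G1 := h3 1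
  have G2 := h3 2
  simp only [e00, e01, e02, e10, e12] at F1 F2 F3 F4 F5 F6 F7 F8 F9 F10 F11 F12
  -- F1 : t 0 0 * t 0 0 = 1
  -- F2 : t 0 1 * t 2 1 = 1
  -- F3 : t 0 2 * t 1 2 = 1
  -- F4 : t 1 0 * t 2 0 = 1
  -- F5 : t 0 1 * t 0 0 = t 2 2 * t 0 1
  -- F6 : t 0 2 * t 0 0 = t 1 1 * t 0 2
  -- F7 : t 2 2 * t 0 1 = t 1 0 * t 0 2
  -- F8 : t 2 0 * s 0 1 = s 0 2 * t 1 0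
  -- F9 : t 2 2 * s 0 1 = s 1 0 * t 1 2
  -- F10 : t 0 2 * s 1 2 + s 0 2 = 0
  -- F11 : t 0 1 * s 2 1 + s 0 1 = 0
  -- F12 : t 1 0 * s 2 0 + s 1 0 = 0
  have L1 : ∀ a b u v : ZMod 5, b * u = 1 → b * a = v * b → v = a := by decide
  have L2 : ∀ b u : ZMod 5, b * u = 1 → u = b^3 := by decide
  have L3 : ∀ b u : ZMod 5, b * u = 1 → b^4 = 1 := by decide
  have hb4 : (t 0 1)^4 = 1 := L3 _ _ F2
  have hc4 : (t 0 2)^4 = 1 := L3 _ _ F3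
  have ht22 : t 2 2 = t 0 0 := L1 _ _ _ _ F2 F5
  have ht11 : t 1 1 = t 0 0 := L1 _ _ _ _ F3 F6
  have ht21 : t 2 1 = (t 0 1)^3 := L2 _ _ F2
  have ht12 : t 1 2 = (t 0 2)^3 := L2 _ _ F3
  rw [ht22] at F7 F9
  have ht10 : t 1 0 = t 0 0 * t 0 1 * (t 0 2)^3 := by
    have L : ∀ a b c u : ZMod 5, c^4 = 1 → a * b = u * c → u = a*b*c^3 := by decide
    exact L _ _ _ _ hc4 F7
  rw [ht10] at F4 F8 F12
  have ht20 : t 2 0 = t 0 0 * (t 0 1)^3 * t 0 2 := by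
    have L : ∀ a b c u : ZMod 5, a*a = 1 → (a*b*c^3) * u = 1 → u = a*b^3*c := by decide
    exact L _ _ _ _ F1 F4
  rw [ht20] at F8
  have LS : ∀ a u : ZMod 5, a + u = 1 → u = 1 - a := by decide
  have hs00 : s 0 0 = 1 - t 0 0 := LS _ _ G0
  rw [ht11] at G1
  rw [ht22] at G2
  have hs11 : s 1 1 = 1 - t 0 0 := LS _ _ G1
  have hs22 : s 2 2 = 1 - t 0 0 := LS _ _ G2
  have hs02 : s 0 2 = (t 0 1)^2 * (t 0 2)^2 * s 0 1 := by
    have L : ∀ a b c d u : ZMod 5, a*a = 1 → b^4 = 1 → c^4 = 1 →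
        (a*b^3*c) * d = u * (a*b*c^3) → u = b^2*c^2*d := by decide
    exact L _ _ _ _ _ F1 hb4 hc4 F8
  rw [ht12] at F9
  have hs10 : s 1 0 = t 0 0 * t 0 2 * s 0 1 := by
    have L : ∀ a c d u : ZMod 5, c^4 = 1 → a * d = u * c^3 → u = a*c*d := by decide
    exact L _ _ _ _ hc4 F9
  rw [hs02] at F10
  have hs12 : s 1 2 = -((t 0 1)^2 * t 0 2 * s 0 1) := by
    have L : ∀ b c d u : ZMod 5, c^4 = 1 → c * u + b^2*c^2*d = 0 → u = -(b^2*c*d) := by decide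
    exact L _ _ _ _ hc4 F10
  have hs21 : s 2 1 = -((t 0 1)^3 * s 0 1) := by
    have L : ∀ b d u : ZMod 5, b^4 = 1 → b * u + d = 0 → u = -(b^3*d) := by decide
    exact L _ _ _ hb4 F11
  rw [hs10] at F12
  have hs20 : s 2 0 = -((t 0 1)^3 * (t 0 2)^2 * s 0 1) := by
    have L : ∀ a b c d u : ZMod 5, a*a = 1 → b^4 = 1 → c^4 = 1 →
        (a*b*c^3) * u + a*c*d = 0 → u = -(b^3*c^2*d) := by decide
    exact L _ _ _ _ _ F1 hb4 hc4 F12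
  constructor
  · funext x y
    fin_cases x <;> fin_cases y <;>
      first
        | rfl
        | exact ht10 | exact ht11 | exact ht12 | exact ht20 | exact ht21 | exact ht22
  · funext x y
    fin_cases x <;> fin_cases y <;>
      first
        | rfl
        | exact hs00 | exact hs02 | exact hs10 | exact hs11 | exact hs12
        | exact hs20 | exact hs21 | exact hs22

set_option maxRecDepth 100000 in
/-- There are exactly 48 `ℤ_K[X]`-module structures `(t, s)` on `ℤ/5ℤ` over
the Takasaki kei `X = ℤ/3ℤ`. -/
theorem count_kei_modules :
    Nat.card {p : (ZMod 3 → ZMod 3 → ZMod 5) × (ZMod 3 → ZMod 3 → ZMod 5) //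
      (∀ x y : ZMod 3, p.1 x y * p.1 (takOp x y) y = 1) ∧
      (∀ x y : ZMod 3, p.1 x y * p.2 (takOp x y) y + p.2 x y = 0) ∧
      (∀ x : ZMod 3, p.1 x x + p.2 x x = 1) ∧
      (∀ x y z : ZMod 3,
        p.1 (takOp x y) z * p.1 x y = p.1 (takOp x z) (takOp y z) * p.1 x z) ∧
      (∀ x y z : ZMod 3,
        p.1 (takOp x y) z * p.2 x y = p.2 (takOp x z) (takOp y z) * p.1 y z) ∧
      (∀ x y z : ZMod 3,
        p.2 (takOp x y) z =
          p.2 (takOp x z) (takOp y z) * p.2 y z +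
            p.1 (takOp x z) (takOp y z) * p.2 x z)} = 48 := by
  have key : Nat.card {p : (ZMod 3 → ZMod 3 → ZMod 5) × (ZMod 3 → ZMod 3 → ZMod 5) // kmP p}
      = 48 := by
    have e : {p : (ZMod 3 → ZMod 3 → ZMod 5) × (ZMod 3 → ZMod 3 → ZMod 5) // kmP p} ≃
        {v : ZMod 5 × ZMod 5 × ZMod 5 × ZMod 5 // kmQ v} :=
      { toFun := fun p =>
          ⟨(p.1.1 0 0, p.1.1 0 1, p.1.1 0 2, p.1.2 0 1), by
            have h := recon p.1.1 p.1.2 p.2.1 p.2.2.1 p.2.2.2.1 p.2.2.2.2.1 p.2.2.2.2.2.1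
            unfold kmQ
            rw [← h.1, ← h.2, Prod.mk.eta]
            exact p.2⟩
        invFun := fun v =>
          ⟨(psiT v.1.1 v.1.2.1 v.1.2.2.1, psiS v.1.1 v.1.2.1 v.1.2.2.1 v.1.2.2.2), v.2⟩
        left_inv := fun p => by
          have h := recon p.1.1 p.1.2 p.2.1 p.2.2.1 p.2.2.2.1 p.2.2.2.2.1 p.2.2.2.2.2.1
          apply Subtype.ext
          simp only
          rw [← h.1, ← h.2, Prod.mk.eta]
        right_inv := fun v => by
          apply Subtype.ext
          rfl }
    rw [Nat.card_congr e, Nat.card_eq_fintype_card]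
    decide
  exact key
end

section
/- The set of solutions (a, b, c, d) ∈ (ℤ/5ℤ)⁴ of the homogeneous linear system 4a + 4b + 2c = 0, 2b + 4c + 4d = 0, 4a + 4c + 2d = 0, 2a + 4b + 4d = 0 has exactly 25 elements. (This is the bead-labeling system for a constant kei labeling of the figure eight knot 4₁ with t = 4 and s = 2 in ℤ/5ℤ, so each of the 3 constant labelings contributes u²⁵, giving Φ = 3u²⁵ for the figure eight knot, distinct from the unknot value 3u⁵.) -/
/-- The bead-labeling system for a constant kei labeling of the figure eight
knot `4₁` over `ℤ/5ℤ` (with `t = 4`, `s = 2`) has exactly 25 solutions, so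
each constant labeling contributes `u²⁵` and `Φ(4₁) = 3u²⁵ ≠ 3u⁵ = Φ(unknot)`. -/
theorem figure_eight_bead_count :
    Nat.card {v : ZMod 5 × ZMod 5 × ZMod 5 × ZMod 5 //
      4 * v.1 + 4 * v.2.1 + 2 * v.2.2.1 = 0 ∧
      2 * v.2.1 + 4 * v.2.2.1 + 4 * v.2.2.2 = 0 ∧
      4 * v.1 + 4 * v.2.2.1 + 2 * v.2.2.2 = 0 ∧
      2 * v.1 + 4 * v.2.1 + 4 * v.2.2.2 = 0} = 25 := by
  rw [Nat.card_eq_fintype_card]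
  decide
end

section
/- The set of solutions (a, b, c, d) ∈ (ℤ/5ℤ)⁴ of the homogeneous linear system 4a + 2b + 4c = 0, 4a + 2c + 4d = 0, 4a + 2b + 4d = 0, 2a + 4c + 4d = 0 has exactly 5 elements. (This is the bead-labeling system for a constant labeling of the virtual knot 4.97 with upward orientation, using t = 2, s = 4 in ℤ/5ℤ, presented by the matrix [[s,t,−1,0],[s,0,t,−1],[−1,t,0,s],[t,0,s,−1]]. Since the downward orientation yields 25 solutions and 25 ≠ 5, the enhanced invariant distinguishes the two orientations, detecting non-invertibility of the virtual knot 4.97.) -/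
/-- The bead-labeling system for a constant labeling of the virtual knot
`4.97` with upward orientation over `ℤ/5ℤ` (with `t = 2`, `s = 4`) has
exactly 5 solutions; since the downward orientation yields 25 ≠ 5, the
enhanced invariant detects the non-invertibility of `4.97`. -/
theorem virtual_knot_up_bead_count :
    Nat.card {v : ZMod 5 × ZMod 5 × ZMod 5 × ZMod 5 //
      4 * v.1 + 2 * v.2.1 + 4 * v.2.2.1 = 0 ∧
      4 * v.1 + 2 * v.2.2.1 + 4 * v.2.2.2 = 0 ∧
      4 * v.1 + 2 * v.2.1 + 4 * v.2.2.2 = 0 ∧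
      2 * v.1 + 4 * v.2.2.1 + 4 * v.2.2.2 = 0} = 5 := by
  rw [Nat.card_eq_fintype_card]
  decide
end
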